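/- arXiv:2602.01511 — 2 statements merged into one kernel-verified Lean document; each statement's English description precedes it below -/
import Mathlib

section
/- Let (R, 𝒜, ν) be a probability space, let H be a finite-dimensional real inner product space, let p : R → ℝ be measurable with 0 ≤ p(r) ≤ 1 for all r, and let u : R → H be measurable with ∫ ‖u(r)‖² dν(r) < ∞. Let μ be the probability measure on R × {0,1} determined by μ(A × {1}) = ∫_A p dν and μ(A × {0}) = ∫_A (1−p) dν, and let ĝ_B(r, b) = b • u(r). Then the total variance of ĝ_B decomposes as Var_μ(ĝ_B) := ∫ ‖ĝ_B‖² dμ − ‖∫ ĝ_B dμ‖² = ∫_R p(r)·(1−p(r))·‖u(r)‖² dν(r) + Var_ν(p • u), where Var_ν(p • u) := ∫_R ‖p(r) • u(r)‖² dν(r) − ‖∫_R p(r) • u(r) dν(r)‖². (Proposition 2: the generator's gradient variance splits into the multiplicative reward-noise term (I) and the cross-rubric inconsistency term (II).) -/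
/-!
The part of `μ` on `{b = true}`, pushed forward to `R`, is `ν.withDensity p`; since `ĝ_B` vanishes
off that part, the first two moments of `ĝ_B` are `∫ p • u dν` and `∫ p ‖u‖² dν`. The
decomposition is then the pointwise identity `p = p (1 - p) + p²`, i.e. the law of total variance
for the Bernoulli(`p r`) outcome.
-/

open MeasureTheory

section DisintegrationAlongSnd

variable {α β : Type*} [MeasurableSpace α] [MeasurableSpace β]
  {μ : Measure (α × β)} {ρ : Measure α} {b : β}

theorem map_fst_restrict_snd_eq_of_measure_prod_singleton
    (h : ∀ A, MeasurableSet A → μ (A ×ˢ {b}) = ρ A) :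
    (μ.restrict (Prod.snd ⁻¹' {b})).map Prod.fst = ρ := by
  ext A hA
  rw [Measure.map_apply measurable_fst hA, Measure.restrict_apply (measurable_fst hA),
    ← Set.prod_eq, h A hA]

theorem integral_ite_snd_eq_of_measure_prod_singleton [MeasurableSingletonClass β] [DecidableEq β]
    (h : ∀ A, MeasurableSet A → μ (A ×ˢ {b}) = ρ A)
    {E : Type*} [NormedAddCommGroup E] [NormedSpace ℝ E] {g : α → E} (hg : StronglyMeasurable g) :
    ∫ x, (if x.2 = b then g x.1 else 0) ∂μ = ∫ a, g a ∂ρ := by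
  have hb : MeasurableSet (Prod.snd ⁻¹' {b} : Set (α × β)) :=
    measurable_snd (measurableSet_singleton b)
  rw [← map_fst_restrict_snd_eq_of_measure_prod_singleton h,
    integral_map measurable_fst.aemeasurable hg.aestronglyMeasurable, ← integral_indicator hb]
  simp only [Set.indicator, Set.mem_preimage, Set.mem_singleton_iff]

end DisintegrationAlongSnd

theorem integral_withDensity_ofReal_eq_integral_smul {α : Type*} [MeasurableSpace α]
    {ν : Measure α} {p : α → ℝ} (hp : Measurable p) (hp0 : ∀ a, 0 ≤ p a)
    {E : Type*} [NormedAddCommGroup E] [NormedSpace ℝ E] (g : α → E) :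
    ∫ a, g a ∂ν.withDensity (fun a => ENNReal.ofReal (p a)) = ∫ a, p a • g a ∂ν := by
  rw [integral_withDensity_eq_integral_toReal_smul hp.ennreal_ofReal
    (ae_of_all _ fun _ => ENNReal.ofReal_lt_top)]
  simp only [ENNReal.toReal_ofReal (hp0 _)]

theorem integral_mul_norm_sq_eq_add {α : Type*} [MeasurableSpace α] {ν : Measure α}
    {E : Type*} [NormedAddCommGroup E] [NormedSpace ℝ E]
    {p : α → ℝ} (hp : Measurable p) (hp0 : ∀ a, 0 ≤ p a) (hp1 : ∀ a, p a ≤ 1)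
    {u : α → E} (hu2 : Integrable (fun a => ‖u a‖ ^ 2) ν) :
    ∫ a, p a * ‖u a‖ ^ 2 ∂ν =
      (∫ a, p a * (1 - p a) * ‖u a‖ ^ 2 ∂ν) + ∫ a, ‖p a • u a‖ ^ 2 ∂ν := by
  have hnoise : Integrable (fun a => p a * (1 - p a) * ‖u a‖ ^ 2) ν :=
    hu2.bdd_mul (c := 1) (hp.mul (measurable_const.sub hp)).aestronglyMeasurable
      (ae_of_all _ fun a => by
        rw [Real.norm_eq_abs, abs_le]; constructor <;> nlinarith [hp0 a, hp1 a])
  have hsmul_sq : ∀ a, ‖p a • u a‖ ^ 2 = p a ^ 2 * ‖u a‖ ^ 2 := fun a => by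
    rw [norm_smul, mul_pow, Real.norm_eq_abs, sq_abs]
  have hmean : Integrable (fun a => ‖p a • u a‖ ^ 2) ν := by
    simp only [hsmul_sq]
    exact hu2.bdd_mul (c := 1) (hp.pow_const 2).aestronglyMeasurable
      (ae_of_all _ fun a => by
        rw [Real.norm_eq_abs, abs_le]; constructor <;> nlinarith [hp0 a, hp1 a])
  rw [← integral_add hnoise hmean]
  congr 1 with a
  rw [hsmul_sq]
  ring

theorem strategyB_variance_decomposition_general
    {R : Type*} [MeasurableSpace R] (ν : Measure R)
    {H : Type*} [NormedAddCommGroup H] [InnerProductSpace ℝ H] [FiniteDimensional ℝ H]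
    [MeasurableSpace H] [BorelSpace H]
    (p : R → ℝ) (hp : Measurable p) (hp0 : ∀ r, 0 ≤ p r) (hp1 : ∀ r, p r ≤ 1)
    (u : R → H) (hu : Measurable u)
    (hu2 : Integrable (fun r => ‖u r‖ ^ 2) ν)
    (μ : Measure (R × Bool))
    (hμ1 : ∀ A : Set R, MeasurableSet A →
      μ (A ×ˢ ({true} : Set Bool)) = ∫⁻ r in A, ENNReal.ofReal (p r) ∂ν) :
    (∫ x : R × Bool, ‖(if x.2 then (1 : ℝ) else 0) • u x.1‖ ^ 2 ∂μ) -
      ‖∫ x : R × Bool, (if x.2 then (1 : ℝ) else 0) • u x.1 ∂μ‖ ^ 2 =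
    (∫ r, p r * (1 - p r) * ‖u r‖ ^ 2 ∂ν) +
      ((∫ r, ‖p r • u r‖ ^ 2 ∂ν) - ‖∫ r, p r • u r ∂ν‖ ^ 2) := by
  have hcorrect : ∀ A, MeasurableSet A →
      μ (A ×ˢ {true}) = ν.withDensity (fun r => ENNReal.ofReal (p r)) A := fun A hA => by
    rw [hμ1 A hA, withDensity_apply _ hA]
  have hfirst : ∫ x : R × Bool, (if x.2 then (1 : ℝ) else 0) • u x.1 ∂μ = ∫ r, p r • u r ∂ν := by
    simp only [ite_smul, one_smul, zero_smul]
    rw [integral_ite_snd_eq_of_measure_prod_singleton hcorrect hu.stronglyMeasurable,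
      integral_withDensity_ofReal_eq_integral_smul hp hp0]
  have hsecond : ∫ x : R × Bool, ‖(if x.2 then (1 : ℝ) else 0) • u x.1‖ ^ 2 ∂μ =
      ∫ r, p r * ‖u r‖ ^ 2 ∂ν := by
    simp only [ite_smul, one_smul, zero_smul, apply_ite (fun v : H => ‖v‖ ^ 2), norm_zero,
      zero_pow two_ne_zero]
    rw [integral_ite_snd_eq_of_measure_prod_singleton hcorrect
        (hu.norm.pow_const 2).stronglyMeasurable,
      integral_withDensity_ofReal_eq_integral_smul hp hp0]
    simp only [smul_eq_mul]
  rw [hfirst, hsecond, integral_mul_norm_sq_eq_add hp hp0 hp1 hu2]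
  ring

/-- Proposition 2 (Generator Variance under Strategy B): the total variance of
`ĝ_B(r,b) = b • u(r)` decomposes into the multiplicative reward-noise term (I)
and the cross-rubric inconsistency term (II). -/
theorem strategyB_variance_decomposition
    {R : Type*} [MeasurableSpace R] (ν : Measure R) [IsProbabilityMeasure ν]
    {H : Type*} [NormedAddCommGroup H] [InnerProductSpace ℝ H] [FiniteDimensional ℝ H]
    [MeasurableSpace H] [BorelSpace H]
    (p : R → ℝ) (hp : Measurable p) (hp0 : ∀ r, 0 ≤ p r) (hp1 : ∀ r, p r ≤ 1)
    (u : R → H) (hu : Measurable u)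
    (hu2 : Integrable (fun r => ‖u r‖ ^ 2) ν)
    (μ : Measure (R × Bool)) [IsProbabilityMeasure μ]
    (hμ1 : ∀ A : Set R, MeasurableSet A →
      μ (A ×ˢ ({true} : Set Bool)) = ∫⁻ r in A, ENNReal.ofReal (p r) ∂ν)
    (hμ0 : ∀ A : Set R, MeasurableSet A →
      μ (A ×ˢ ({false} : Set Bool)) = ∫⁻ r in A, ENNReal.ofReal (1 - p r) ∂ν) :
    (∫ x : R × Bool, ‖(if x.2 then (1 : ℝ) else 0) • u x.1‖ ^ 2 ∂μ) -
      ‖∫ x : R × Bool, (if x.2 then (1 : ℝ) else 0) • u x.1 ∂μ‖ ^ 2 =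
    (∫ r, p r * (1 - p r) * ‖u r‖ ^ 2 ∂ν) +
      ((∫ r, ‖p r • u r‖ ^ 2 ∂ν) - ‖∫ r, p r • u r ∂ν‖ ^ 2) :=
  strategyB_variance_decomposition_general ν p hp hp0 hp1 u hu hu2 μ hμ1
end

section
/- Let (R, 𝒜, ν) be a probability space, let H be a finite-dimensional real inner product space, let p : R → ℝ be measurable with 0 < p(r) < 1 for ν-almost every r (and 0 ≤ p ≤ 1 everywhere), and let u, w : R → H be measurable with ∫ ‖u‖² dν < ∞ and ∫ ‖w‖² dν < ∞. Assume 0 < ∫_R p(r)²·‖u(r)‖² dν(r), set C₁ := Var_ν(p • u) / ∫_R p(r)²·‖u(r)‖² dν(r) with Var_ν(p • u) := ∫ ‖p • u‖² dν − ‖∫ p • u dν‖², and assume that for ν-almost every r, ‖w(r)‖ > 0 and ‖u(r)‖ / ‖w(r)‖ > √((1 − p(r)) / (1 − p(r) + C₁·p(r))). Let μ be the probability measure on R × {0,1} with μ(A × {1}) = ∫_A p dν and μ(A × {0}) = ∫_A (1−p) dν, and let ĝ_B(r, b) = b • u(r). Then Var_μ(ĝ_B) > ∫_R p(r)·(1−p(r))·‖w(r)‖²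 dν(r). (Theorem 1, Strict Variance Domination: under the Exploration-Gradient Sufficiency assumption, the gradient variance of Strategy B strictly dominates the expected conditional variance of Strategy A.) -/
/-!
Since Strategy B's estimator vanishes on the fibre `b = 0` and `μ` has density `p` on the fibre
`b = 1`, its variance is `J - M` with `J = ∫ p ‖u‖²` and `M = ‖∫ p • u‖²`. Writing
`I = ∫ p² ‖u‖²`, so that `C₁ = (I - M) / I ≥ 0` by Jensen, this is
`J - M = ∫ (p (1 - p) ‖u‖² + C₁ p² ‖u‖²) dν`. Squaring the Exploration-Gradient Sufficiency
inequality and multiplying by `p (1 - p + C₁ p) ‖w‖²` shows that this integrand strictly exceeds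
`p (1 - p) ‖w‖²` almost everywhere, and a strict a.e. inequality integrates to a strict one.
-/

open MeasureTheory Set

namespace MeasureTheory

section ProdBool

variable {R : Type*} [MeasurableSpace R]

theorem Measure.restrict_univ_prod_true_eq_map {μ : Measure (R × Bool)} {ρ : Measure R}
    (h : ∀ A : Set R, MeasurableSet A → μ (A ×ˢ ({true} : Set Bool)) = ρ A) :
    μ.restrict (univ ×ˢ {true}) = ρ.map (fun r => (r, true)) := by
  ext S hS
  have hpre : MeasurableSet ((fun r : R => (r, true)) ⁻¹' S) :=
    measurable_prodMk_right hS
  have hslice : S ∩ univ ×ˢ {true} = ((fun r : R => (r, true)) ⁻¹' S) ×ˢ {true} := by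
    ext ⟨r, b⟩
    cases b <;> simp
  rw [Measure.restrict_apply hS, Measure.map_apply measurable_prodMk_right hS, hslice, h _ hpre]

theorem integral_eq_integral_true_of_apply_false_eq_zero {E : Type*} [NormedAddCommGroup E]
    [NormedSpace ℝ E] {μ : Measure (R × Bool)} {ρ : Measure R}
    (h : ∀ A : Set R, MeasurableSet A → μ (A ×ˢ ({true} : Set Bool)) = ρ A)
    {f : R × Bool → E} (hf : ∀ r, f (r, false) = 0) :
    ∫ x, f x ∂μ = ∫ r, f (r, true) ∂ρ := by
  have hf' : ∀ x ∉ univ ×ˢ ({true} : Set Bool), f x = 0 := by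
    rintro ⟨r, b⟩ hx
    cases b
    · exact hf r
    · simp at hx
  rw [← setIntegral_eq_integral_of_forall_compl_eq_zero hf',
    Measure.restrict_univ_prod_true_eq_map h,
    (measurableEmbedding_prod_mk_right true).integral_map]

theorem integral_eq_integral_smul_of_apply_false_eq_zero {E : Type*} [NormedAddCommGroup E]
    [NormedSpace ℝ E] {ν : Measure R} {μ : Measure (R × Bool)} {p : R → ℝ} (hp : Measurable p)
    (hp0 : ∀ r, 0 ≤ p r)
    (hμ : ∀ A : Set R, MeasurableSet A →
      μ (A ×ˢ ({true} : Set Bool)) = ∫⁻ r in A, ENNReal.ofReal (p r) ∂ν)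
    {f : R × Bool → E} (hf : ∀ r, f (r, false) = 0) :
    ∫ x, f x ∂μ = ∫ r, p r • f (r, true) ∂ν := by
  have hρ : ∀ A : Set R, MeasurableSet A →
      μ (A ×ˢ ({true} : Set Bool)) = ν.withDensity (fun r => ENNReal.ofReal (p r)) A :=
    fun A hA => by rw [hμ A hA, withDensity_apply _ hA]
  rw [integral_eq_integral_true_of_apply_false_eq_zero hρ hf,
    integral_withDensity_eq_integral_toReal_smul hp.ennreal_ofReal
      (ae_of_all _ fun _ => ENNReal.ofReal_lt_top)]
  simp_rw [ENNReal.toReal_ofReal (hp0 _)]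

theorem integral_norm_sq_sub_sq_norm_integral_ite_smul {E : Type*} [NormedAddCommGroup E]
    [NormedSpace ℝ E] {ν : Measure R} {μ : Measure (R × Bool)} {p : R → ℝ} (hp : Measurable p)
    (hp0 : ∀ r, 0 ≤ p r)
    (hμ : ∀ A : Set R, MeasurableSet A →
      μ (A ×ˢ ({true} : Set Bool)) = ∫⁻ r in A, ENNReal.ofReal (p r) ∂ν) (u : R → E) :
    (∫ x : R × Bool, ‖(if x.2 then (1 : ℝ) else 0) • u x.1‖ ^ 2 ∂μ) -
        ‖∫ x : R × Bool, (if x.2 then (1 : ℝ) else 0) • u x.1 ∂μ‖ ^ 2 =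
      (∫ r, p r * ‖u r‖ ^ 2 ∂ν) - ‖∫ r, p r • u r ∂ν‖ ^ 2 := by
  rw [integral_eq_integral_smul_of_apply_false_eq_zero hp hp0 hμ (by simp),
    integral_eq_integral_smul_of_apply_false_eq_zero hp hp0 hμ (by simp)]
  simp

end ProdBool

section Integral

variable {α : Type*} [MeasurableSpace α] {μ : Measure α}

theorem sq_norm_integral_le_integral_norm_sq [IsProbabilityMeasure μ] {E : Type*}
    [NormedAddCommGroup E] [NormedSpace ℝ E] {f : α → E} (hf : AEStronglyMeasurable f μ)
    (hf2 : Integrable (fun x => ‖f x‖ ^ 2) μ) :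
    ‖∫ x, f x ∂μ‖ ^ 2 ≤ ∫ x, ‖f x‖ ^ 2 ∂μ := by
  have hmem : MemLp (fun x => ‖f x‖) 2 μ := (memLp_two_iff_integrable_sq_norm hf).mpr hf2 |>.norm
  have hvar := ProbabilityTheory.variance_nonneg (fun x => ‖f x‖) μ
  rw [ProbabilityTheory.variance_eq_sub hmem] at hvar
  calc ‖∫ x, f x ∂μ‖ ^ 2 ≤ (∫ x, ‖f x‖ ∂μ) ^ 2 :=
        pow_le_pow_left₀ (norm_nonneg _) (norm_integral_le_integral_norm f) 2
    _ ≤ ∫ x, ‖f x‖ ^ 2 ∂μ := by simpa using hvar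

theorem integral_lt_integral_of_ae_lt [NeZero μ] {f g : α → ℝ} (hf : Integrable f μ)
    (hg : Integrable g μ) (hlt : ∀ᵐ x ∂μ, f x < g x) :
    ∫ x, f x ∂μ < ∫ x, g x ∂μ := by
  have hsupp : 0 < μ (Function.support (g - f)) := by
    refine pos_iff_ne_zero.mpr fun h0 => ?_
    obtain ⟨x, hx, hx0⟩ := (hlt.and (measure_eq_zero_iff_ae_notMem.mp h0)).exists
    simp only [Function.mem_support, Pi.sub_apply, not_not] at hx0
    linarith
  have hpos : 0 < ∫ x, (g - f) x ∂μ :=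
    (integral_pos_iff_support_of_nonneg_ae (hlt.mono fun _ hx => sub_nonneg.mpr hx.le)
      (hg.sub hf)).mpr hsupp
  rw [Pi.sub_def, integral_sub hg hf] at hpos
  linarith

theorem Integrable.mul_of_forall_mem_Icc {c g : α → ℝ} (hg : Integrable g μ)
    (hc : AEStronglyMeasurable c μ) (hc01 : ∀ x, c x ∈ Icc 0 1) :
    Integrable (fun x => c x * g x) μ :=
  hg.bdd_mul (c := 1) hc
    (ae_of_all _ fun x => abs_le.mpr ⟨by linarith [(hc01 x).1], (hc01 x).2⟩)

end Integral

end MeasureTheory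

theorem mul_one_sub_mul_sq_lt_of_sqrt_lt_div {p a b C : ℝ} (hp0 : 0 < p) (hp1 : p < 1)
    (hC : 0 ≤ C) (hb : 0 < b) (h : √((1 - p) / (1 - p + C * p)) < a / b) :
    p * (1 - p) * b ^ 2 < p * (1 - p) * a ^ 2 + C * (p ^ 2 * a ^ 2) := by
  have hD : 0 < 1 - p + C * p := by nlinarith
  have hsq : (1 - p) / (1 - p + C * p) < (a / b) ^ 2 :=
    (Real.sqrt_lt' ((Real.sqrt_nonneg _).trans_lt h)).mp h
  rw [div_pow, div_lt_div_iff₀ hD (by positivity)] at hsq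
  nlinarith [mul_lt_mul_of_pos_left hsq hp0]

theorem strict_variance_domination_general
    {R : Type*} [MeasurableSpace R] (ν : Measure R) [IsProbabilityMeasure ν]
    {H : Type*} [NormedAddCommGroup H] [InnerProductSpace ℝ H] [FiniteDimensional ℝ H]
    [MeasurableSpace H] [BorelSpace H]
    (p : R → ℝ) (hp : Measurable p) (hp0 : ∀ r, 0 ≤ p r) (hp1 : ∀ r, p r ≤ 1)
    (hp01 : ∀ᵐ r ∂ν, 0 < p r ∧ p r < 1)
    (u w : R → H) (hu : Measurable u)
    (hu2 : Integrable (fun r => ‖u r‖ ^ 2) ν)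
    (hw2 : Integrable (fun r => ‖w r‖ ^ 2) ν)
    (hpos : 0 < ∫ r, p r ^ 2 * ‖u r‖ ^ 2 ∂ν)
    (hEGS : ∀ᵐ r ∂ν, 0 < ‖w r‖ ∧
      ‖u r‖ / ‖w r‖ > Real.sqrt ((1 - p r) /
        (1 - p r + (((∫ s, ‖p s • u s‖ ^ 2 ∂ν) - ‖∫ s, p s • u s ∂ν‖ ^ 2) /
          (∫ s, p s ^ 2 * ‖u s‖ ^ 2 ∂ν)) * p r)))
    (μ : Measure (R × Bool))
    (hμ1 : ∀ A : Set R, MeasurableSet A →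
      μ (A ×ˢ ({true} : Set Bool)) = ∫⁻ r in A, ENNReal.ofReal (p r) ∂ν) :
    (∫ x : R × Bool, ‖(if x.2 then (1 : ℝ) else 0) • u x.1‖ ^ 2 ∂μ) -
      ‖∫ x : R × Bool, (if x.2 then (1 : ℝ) else 0) • u x.1 ∂μ‖ ^ 2 >
    ∫ r, p r * (1 - p r) * ‖w r‖ ^ 2 ∂ν := by
  rw [integral_norm_sq_sub_sq_norm_integral_ite_smul hp hp0 hμ1, gt_iff_lt]
  have hJ_int : Integrable (fun r => p r * ‖u r‖ ^ 2) ν :=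
    hu2.mul_of_forall_mem_Icc hp.aestronglyMeasurable fun r => ⟨hp0 r, hp1 r⟩
  have hI_int : Integrable (fun r => p r ^ 2 * ‖u r‖ ^ 2) ν :=
    hu2.mul_of_forall_mem_Icc (hp.pow_const 2).aestronglyMeasurable
      fun r => ⟨by positivity, pow_le_one₀ (hp0 r) (hp1 r)⟩
  have hW_int : Integrable (fun r => p r * (1 - p r) * ‖w r‖ ^ 2) ν :=
    hw2.mul_of_forall_mem_Icc (hp.mul (measurable_const.sub hp)).aestronglyMeasurable
      fun r => ⟨mul_nonneg (hp0 r) (by linarith [hp1 r]), by nlinarith [hp0 r, hp1 r]⟩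
  have hnorm_smul : ∀ r, ‖p r • u r‖ ^ 2 = p r ^ 2 * ‖u r‖ ^ 2 := fun r => by
    rw [norm_smul, mul_pow, Real.norm_eq_abs, sq_abs]
  simp_rw [hnorm_smul] at hEGS
  set I := ∫ r, p r ^ 2 * ‖u r‖ ^ 2 ∂ν
  set C := (I - ‖∫ s, p s • u s ∂ν‖ ^ 2) / I with hC
  have hC0 : 0 ≤ C := by
    refine div_nonneg (sub_nonneg.mpr ?_) hpos.le
    simpa only [hnorm_smul] using sq_norm_integral_le_integral_norm_sq (f := fun r => p r • u r)
      (hp.aestronglyMeasurable.smul hu.aestronglyMeasurable)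
      (hI_int.congr (ae_of_all _ fun r => (hnorm_smul r).symm))
  have hpointwise : ∀ᵐ r ∂ν, p r * (1 - p r) * ‖w r‖ ^ 2 <
      p r * ‖u r‖ ^ 2 - p r ^ 2 * ‖u r‖ ^ 2 + C * (p r ^ 2 * ‖u r‖ ^ 2) := by
    filter_upwards [hp01, hEGS] with r ⟨hr0, hr1⟩ ⟨hw0, hlt⟩
    have := mul_one_sub_mul_sq_lt_of_sqrt_lt_div hr0 hr1 hC0 hw0 hlt
    linarith
  have hdiff_int : Integrable (fun r => p r * ‖u r‖ ^ 2 - p r ^ 2 * ‖u r‖ ^ 2) ν :=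
    hJ_int.sub hI_int
  calc ∫ r, p r * (1 - p r) * ‖w r‖ ^ 2 ∂ν
      < ∫ r, (p r * ‖u r‖ ^ 2 - p r ^ 2 * ‖u r‖ ^ 2 + C * (p r ^ 2 * ‖u r‖ ^ 2)) ∂ν :=
        integral_lt_integral_of_ae_lt hW_int (hdiff_int.add (hI_int.const_mul C)) hpointwise
    _ = (∫ r, p r * ‖u r‖ ^ 2 ∂ν) - ‖∫ r, p r • u r ∂ν‖ ^ 2 := by
      rw [integral_add hdiff_int (hI_int.const_mul C), integral_sub hJ_int hI_int,
        integral_const_mul, hC, div_mul_cancel₀ _ hpos.ne']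
      ring

/-- Theorem 1 (Strict Variance Domination): under the Exploration-Gradient
Sufficiency assumption, the gradient variance of Strategy B strictly dominates
the expected conditional variance of Strategy A. -/
theorem strict_variance_domination
    {R : Type*} [MeasurableSpace R] (ν : Measure R) [IsProbabilityMeasure ν]
    {H : Type*} [NormedAddCommGroup H] [InnerProductSpace ℝ H] [FiniteDimensional ℝ H]
    [MeasurableSpace H] [BorelSpace H]
    (p : R → ℝ) (hp : Measurable p) (hp0 : ∀ r, 0 ≤ p r) (hp1 : ∀ r, p r ≤ 1)
    (hp01 : ∀ᵐ r ∂ν, 0 < p r ∧ p r < 1)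
    (u w : R → H) (hu : Measurable u) (hw : Measurable w)
    (hu2 : Integrable (fun r => ‖u r‖ ^ 2) ν)
    (hw2 : Integrable (fun r => ‖w r‖ ^ 2) ν)
    (hpos : 0 < ∫ r, p r ^ 2 * ‖u r‖ ^ 2 ∂ν)
    (hEGS : ∀ᵐ r ∂ν, 0 < ‖w r‖ ∧
      ‖u r‖ / ‖w r‖ > Real.sqrt ((1 - p r) /
        (1 - p r + (((∫ s, ‖p s • u s‖ ^ 2 ∂ν) - ‖∫ s, p s • u s ∂ν‖ ^ 2) /
          (∫ s, p s ^ 2 * ‖u s‖ ^ 2 ∂ν)) * p r)))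
    (μ : Measure (R × Bool)) [IsProbabilityMeasure μ]
    (hμ1 : ∀ A : Set R, MeasurableSet A →
      μ (A ×ˢ ({true} : Set Bool)) = ∫⁻ r in A, ENNReal.ofReal (p r) ∂ν)
    (hμ0 : ∀ A : Set R, MeasurableSet A →
      μ (A ×ˢ ({false} : Set Bool)) = ∫⁻ r in A, ENNReal.ofReal (1 - p r) ∂ν) :
    (∫ x : R × Bool, ‖(if x.2 then (1 : ℝ) else 0) • u x.1‖ ^ 2 ∂μ) -
      ‖∫ x : R × Bool, (if x.2 then (1 : ℝ) else 0) • u x.1 ∂μ‖ ^ 2 >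
    ∫ r, p r * (1 - p r) * ‖w r‖ ^ 2 ∂ν :=
  strict_variance_domination_general ν p hp hp0 hp1 hp01 u w hu hu2 hw2 hpos hEGS μ hμ1
end
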